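/- Let n ≥ 2 and 1 ≤ n₁ < n be integers with either n₁ = 2 < n−1 or 1 < n₁ = n−2. For k ∈ ℕ let N_k be the set of all products ∏_{1≤i≤n₁, n₁+1≤t≤n} (x_i·x_t − y_i·y_t)^{h_{it}} over tuples of natural numbers (h_{it}) with ∑ h_{it} = k, and let d_k = dim span N_k. Then there exist real constants c₁, c₂ > 0 and K ∈ ℕ such that c₁·k^{2n−5} ≤ d_k ≤ c₂·k^{2n−5} for all k ≥ K. -/

import Mathlib

open MvPolynomial

/-- The set N_k of products ∏ (x_i x_t − y_i y_t)^{h_{it}} over tuples with ∑ h_{it} = k,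
where (0-based) i ranges over indices with i.val < n₁ (i.e. 1 ≤ i ≤ n₁) and t over indices
with n₁ ≤ t.val (i.e. n₁+1 ≤ t ≤ n). x-variables are `Sum.inl`, y-variables `Sum.inr`. -/
def Nset (n n₁ k : ℕ) : Set (MvPolynomial (Fin n ⊕ Fin n) ℝ) :=
  {f | ∃ h : Fin n → Fin n → ℕ,
    (∑ i ∈ Finset.univ.filter (fun i : Fin n => i.val < n₁),
      ∑ t ∈ Finset.univ.filter (fun t : Fin n => n₁ ≤ t.val), h i t) = k ∧
    f = ∏ i ∈ Finset.univ.filter (fun i : Fin n => i.val < n₁),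
        ∏ t ∈ Finset.univ.filter (fun t : Fin n => n₁ ≤ t.val),
          (X (Sum.inl i) * X (Sum.inl t) - X (Sum.inr i) * X (Sum.inr t)) ^ h i t}

/-!
In both cases one side of the bipartition `{1, …, n₁} ⊔ {n₁ + 1, …, n}` consists of two indices
`a, b` and the other side `B` has `n - 2` elements. The substitution
`x_a ↦ 1, x_b ↦ 0, y_a ↦ 0, y_b ↦ -1` sends `x_a x_t - y_a y_t ↦ x_t` and `x_b x_t - y_b y_t ↦ y_t`
for `t ∈ B`, so it maps the products in `N_k` to distinct monomials, one for each exponent tuple;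
hence these products are linearly independent and `d_k` counts the monomials of degree `k` in
`2n - 4` variables, `d_k = C(k + 2n - 5, k)`, which is of order `k ^ (2n - 5)`.
-/

open Finset Submodule Module

lemma card_piAntidiag_nat {ι : Type*} [DecidableEq ι] (s : Finset ι) (k : ℕ) :
    #(piAntidiag s k) = (#s + k - 1).choose k := by
  rw [← card_finsuppAntidiag_nat_eq_choose, finsuppAntidiag, card_map, card_attach]

lemma linearIndepOn_prod_pow {R ι τ A : Type*} [CommRing R] [CommRing A] [Algebra R A]
    (P : Finset ι) (f : ι → A) (φ : A →ₐ[R] MvPolynomial τ R) (v : ι → τ)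
    (hv : Set.InjOn v P) (hφ : ∀ p ∈ P, φ (f p) = X (v p)) :
    LinearIndepOn R (fun g : ι → ℕ => ∏ p ∈ P, f p ^ g p) {g | ∀ p, g p ≠ 0 → p ∈ P} := by
  classical
  set e : (ι → ℕ) → τ →₀ ℕ := fun g => ∑ p ∈ P, Finsupp.single (v p) (g p) with he
  have he_apply : ∀ g, ∀ p ∈ P, e g (v p) = g p := by
    intro g p hp
    simp only [he, Finsupp.finsetSum_apply, Finsupp.single_apply]
    rw [sum_congr rfl fun q hq => by rw [hv.eq_iff hq hp], sum_ite_eq' P p, if_pos hp]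
  have he_inj : Set.InjOn e {g | ∀ p, g p ≠ 0 → p ∈ P} := by
    intro g hg g' hg' hgg'
    funext p
    by_cases hp : p ∈ P
    · rw [← he_apply g p hp, ← he_apply g' p hp, hgg']
    · rw [not_imp_comm.1 (hg p) hp, not_imp_comm.1 (hg' p) hp]
  have hφ_prod : ∀ g, φ (∏ p ∈ P, f p ^ g p) = monomial (e g) 1 := by
    intro g
    rw [map_prod, he, monomial_sum_one]
    exact prod_congr rfl fun p hp => by rw [map_pow, hφ p hp, X_pow_eq_monomial]
  have hmono : LinearIndependent R fun g : {g : ι → ℕ | ∀ p, g p ≠ 0 → p ∈ P} =>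
      (monomial (e g) (1 : R) : MvPolynomial τ R) :=
    (basisMonomials τ R).linearIndependent.comp _ he_inj.injective
  refine LinearIndependent.of_comp φ.toLinearMap ?_
  simpa only [Function.comp_def, AlgHom.toLinearMap_apply, hφ_prod] using hmono

noncomputable section PairForm

variable (R : Type*) [CommRing R] {α : Type*}

def pairForm (i t : α) : MvPolynomial (α ⊕ α) R :=
  X (Sum.inl i) * X (Sum.inl t) - X (Sum.inr i) * X (Sum.inr t)

def pairProducts (L B : Finset α) (k : ℕ) : Set (MvPolynomial (α ⊕ α) R) :=
  {f | ∃ h : α → α → ℕ, ∑ i ∈ L, ∑ t ∈ B, h i t = k ∧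
    f = ∏ i ∈ L, ∏ t ∈ B, pairForm R i t ^ h i t}

variable {R}

lemma pairForm_comm (i t : α) : pairForm R i t = pairForm R t i := by
  simp only [pairForm, mul_comm]

lemma pairProducts_comm (L B : Finset α) (k : ℕ) :
    pairProducts R L B k = pairProducts R B L k := by
  suffices ∀ L B : Finset α, pairProducts R L B k ⊆ pairProducts R B L k from
    (this L B).antisymm (this B L)
  rintro L B _ ⟨h, hk, rfl⟩
  refine ⟨flip h, by rwa [sum_comm], ?_⟩
  rw [prod_comm]
  simp only [flip, pairForm_comm]

variable [DecidableEq α]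

lemma pairProducts_eq_image (L B : Finset α) (k : ℕ) :
    pairProducts R L B k = (fun g : α × α → ℕ => ∏ p ∈ L ×ˢ B, pairForm R p.1 p.2 ^ g p) ''
      ↑(piAntidiag (L ×ˢ B) k) := by
  ext f
  simp only [pairProducts, Set.mem_ofPred_eq, Set.mem_image, mem_coe, mem_piAntidiag,
    prod_product, sum_product]
  constructor
  · rintro ⟨h, hk, rfl⟩
    refine ⟨fun p => if p ∈ L ×ˢ B then h p.1 p.2 else 0,
      ⟨?_, fun p hp => by_contra fun hp' => hp (if_neg hp')⟩, ?_⟩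
    · rw [← hk]
      exact sum_congr rfl fun i hi => sum_congr rfl fun t ht => if_pos (mem_product.2 ⟨hi, ht⟩)
    · exact prod_congr rfl fun i hi => prod_congr rfl fun t ht => by
        simp only [if_pos (mem_product.2 ⟨hi, ht⟩ : (i, t) ∈ L ×ˢ B)]
  · rintro ⟨g, ⟨hk, -⟩, rfl⟩
    exact ⟨fun i t => g (i, t), hk, rfl⟩

lemma linearIndepOn_prod_pairForm {a b : α} (hab : a ≠ b) {B : Finset α} (ha : a ∉ B)
    (hb : b ∉ B) :
    LinearIndepOn R (fun g : α × α → ℕ => ∏ p ∈ {a, b} ×ˢ B, pairForm R p.1 p.2 ^ g p)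
      {g | ∀ p, g p ≠ 0 → p ∈ ({a, b} : Finset α) ×ˢ B} := by
  let s : α ⊕ α → MvPolynomial (α ⊕ α) R := Function.update (Function.update
    (Function.update (Function.update X (.inl a) 1) (.inl b) 0) (.inr a) 0) (.inr b) (-1)
  refine linearIndepOn_prod_pow _ _ (aeval s)
    (fun p => if p.1 = a then .inl p.2 else .inr p.2) ?_ ?_
  · rintro ⟨i, t⟩ hp ⟨i', t'⟩ hp' h
    simp only [coe_product, Set.mem_prod, coe_insert, coe_singleton, Set.mem_insert_iff,
      Set.mem_singleton_iff] at hp hp'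
    rcases hp with ⟨rfl | rfl, -⟩ <;> rcases hp' with ⟨rfl | rfl, -⟩ <;> simp_all [eq_comm]
  · rintro ⟨i, t⟩ hp
    obtain ⟨hi, ht⟩ := mem_product.1 hp
    have hta : t ≠ a := fun h => ha (h ▸ ht)
    have htb : t ≠ b := fun h => hb (h ▸ ht)
    rcases mem_insert.1 hi with rfl | hi
    · simp [pairForm, s, hab, hta, htb]
    · rw [mem_singleton.1 hi]
      simp [pairForm, s, hab.symm, hta, htb]

lemma finrank_span_pairProducts [Nontrivial R] {a b : α} (hab : a ≠ b) {B : Finset α}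
    (ha : a ∉ B) (hb : b ∉ B) (k : ℕ) :
    finrank R (span R (pairProducts R {a, b} B k)) = (2 * #B + k - 1).choose k := by
  have hind : LinearIndependent R fun g : (piAntidiag ({a, b} ×ˢ B) k : Set (α × α → ℕ)) =>
      ∏ p ∈ {a, b} ×ˢ B, pairForm R p.1 p.2 ^ g.1 p :=
    (linearIndepOn_prod_pairForm hab ha hb).mono fun g hg => (mem_piAntidiag.1 hg).2
  rw [pairProducts_eq_image, Set.image_eq_range, finrank_span_eq_card hind]
  refine (Fintype.card_coe _).trans ?_
  rw [card_piAntidiag_nat, card_product, card_pair hab]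

end PairForm

lemma card_filter_le_val (n m : ℕ) : #{t : Fin n | m ≤ t.val} = n - m := by
  have hsplit := card_filter_add_card_filter_not (s := (univ : Finset (Fin n)))
    (fun t : Fin n => t.val < m)
  simp only [not_lt, Fin.card_filter_val_lt, card_univ, Fintype.card_fin] at hsplit
  omega

lemma finrank_span_Nset {n n₁ : ℕ} (hcase : (n₁ = 2 ∧ 2 < n - 1) ∨ (1 < n₁ ∧ n₁ = n - 2))
    (k : ℕ) : finrank ℝ (span ℝ (Nset n n₁ k)) = (k + (2 * n - 5)).choose k := by
  have hN : Nset n n₁ k = pairProducts ℝ {i : Fin n | i.val < n₁} {t : Fin n | n₁ ≤ t.val} k :=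
    rfl
  rcases hcase with ⟨rfl, hn⟩ | ⟨hn₁, rfl⟩
  · have hL : ({i : Fin n | i.val < 2} : Finset (Fin n)) = {⟨0, by omega⟩, ⟨1, by omega⟩} := by
      ext i
      simp only [mem_filter, mem_univ, true_and, mem_insert, mem_singleton, Fin.ext_iff]
      omega
    rw [hN, hL, finrank_span_pairProducts (by simp) (by simp) (by simp), card_filter_le_val]
    congr 1
    omega
  · have hR : ({t : Fin n | n - 2 ≤ t.val} : Finset (Fin n)) =
        {⟨n - 2, by omega⟩, ⟨n - 1, by omega⟩} := by
      ext t
      simp only [mem_filter, mem_univ, true_and, mem_insert, mem_singleton, Fin.ext_iff]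
      omega
    rw [hN, hR, pairProducts_comm, finrank_span_pairProducts (by simp; omega) (by simp)
      (by simp; omega), Fin.card_filter_val_lt]
    congr 1
    omega

lemma exists_bounds_choose_add (M : ℕ) :
    ∃ c₁ c₂ : ℝ, 0 < c₁ ∧ 0 < c₂ ∧ ∀ k : ℕ, k ≥ 1 →
      c₁ * (k : ℝ) ^ M ≤ ((k + M).choose k : ℝ) ∧ ((k + M).choose k : ℝ) ≤ c₂ * (k : ℝ) ^ M := by
  refine ⟨1 / M.factorial, (M + 1) ^ M / M.factorial, by positivity, by positivity, fun k hk => ?_⟩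
  rw [Nat.choose_symm_add]
  constructor
  · calc 1 / M.factorial * (k : ℝ) ^ M ≤ ((k + M + 1 - M : ℕ) : ℝ) ^ M / M.factorial := by
          rw [one_div_mul_eq_div]
          gcongr
          exact_mod_cast (by omega : k ≤ k + M + 1 - M)
      _ ≤ _ := Nat.pow_le_choose M (k + M)
  · calc ((k + M).choose M : ℝ) ≤ ((k + M : ℕ) : ℝ) ^ M / M.factorial :=
          Nat.choose_le_pow_div M (k + M)
      _ ≤ ((M + 1) * k : ℝ) ^ M / M.factorial := by
          gcongr
          have : (1 : ℝ) ≤ k := by exact_mod_cast hk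
          push_cast
          nlinarith
      _ = (M + 1) ^ M / M.factorial * (k : ℝ) ^ M := by rw [mul_pow]; ring

theorem stmt_2_general (n n₁ : ℕ)
    (hcase : (n₁ = 2 ∧ 2 < n - 1) ∨ (1 < n₁ ∧ n₁ = n - 2)) :
    ∃ c₁ c₂ : ℝ, 0 < c₁ ∧ 0 < c₂ ∧ ∃ K : ℕ, ∀ k ≥ K,
      c₁ * (k : ℝ) ^ (2 * n - 5) ≤
        (Module.finrank ℝ (Submodule.span ℝ (Nset n n₁ k)) : ℝ) ∧
      (Module.finrank ℝ (Submodule.span ℝ (Nset n n₁ k)) : ℝ) ≤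
        c₂ * (k : ℝ) ^ (2 * n - 5) := by
  obtain ⟨c₁, c₂, hc₁, hc₂, hbounds⟩ := exists_bounds_choose_add (2 * n - 5)
  refine ⟨c₁, c₂, hc₁, hc₂, 1, fun k hk => ?_⟩
  rw [finrank_span_Nset hcase k]
  exact hbounds k hk

theorem stmt_2 (n n₁ : ℕ) (hn : 2 ≤ n) (h1 : 1 ≤ n₁) (h2 : n₁ < n)
    (hcase : (n₁ = 2 ∧ 2 < n - 1) ∨ (1 < n₁ ∧ n₁ = n - 2)) :
    ∃ c₁ c₂ : ℝ, 0 < c₁ ∧ 0 < c₂ ∧ ∃ K : ℕ, ∀ k ≥ K,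
      c₁ * (k : ℝ) ^ (2 * n - 5) ≤
        (Module.finrank ℝ (Submodule.span ℝ (Nset n n₁ k)) : ℝ) ∧
      (Module.finrank ℝ (Submodule.span ℝ (Nset n n₁ k)) : ℝ) ≤
        c₂ * (k : ℝ) ^ (2 * n - 5) :=
  stmt_2_general n n₁ hcase
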